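/- The only monomial ideals in K[x_1,...,x_n] which are both 𝔖_n-fixed and strongly stable are the powers (x_1,...,x_n)^d of the homogeneous maximal ideal. -/

import Mathlib

/-!
Let `d` be the least degree of a monomial generator of `I`; then `I ⊆ 𝔪^d` for
`𝔪 = (x_1,...,x_n)`. For the reverse inclusion, symmetry lets a Borel move
`x^a ↦ x^a · x_i / x_j` be applied for `i > j` as well as for `i < j` (conjugate by the
transposition `(i j)`), and any two monomials of the same degree are joined by a chain of such
moves, so every monomial of degree `d` lies in `I`.
-/

open MvPolynomial

/-- The monomial `x^a` in `K[x_1,...,x_n]`. -/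
noncomputable def mon (K : Type) [Field K] (n : ℕ) (a : Fin n → ℕ) :
    MvPolynomial (Fin n) K :=
  monomial (Finsupp.equivFunOnFinite.symm a) 1

/-- A monomial ideal: an ideal generated by monomials. -/
def IsMonomialIdeal (K : Type) [Field K] (n : ℕ)
    (I : Ideal (MvPolynomial (Fin n) K)) : Prop :=
  ∃ S : Set (Fin n → ℕ), I = Ideal.span (mon K n '' S)

/-- A symmetric (`𝔖_n`-fixed) ideal. -/
def IsSymmetricIdeal (K : Type) [Field K] (n : ℕ)
    (I : Ideal (MvPolynomial (Fin n) K)) : Prop :=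
  ∀ σ : Equiv.Perm (Fin n), Ideal.map (rename (σ : Fin n → Fin n)) I = I

/-- The exponent vector obtained from `a` by the Borel move `x^a ↦ x^a · x_i / x_j`. -/
def borelMoveVec (n : ℕ) (a : Fin n → ℕ) (i j : Fin n) : Fin n → ℕ :=
  fun k => if k = i then a k + 1 else if k = j then a k - 1 else a k

/-- A symmetric strongly shifted ideal (sssi). -/
def IsSSSI (K : Type) [Field K] (n : ℕ)
    (I : Ideal (MvPolynomial (Fin n) K)) : Prop :=
  IsMonomialIdeal K n I ∧ IsSymmetricIdeal K n I ∧
    ∀ lam : Fin n → ℕ, Monotone lam → mon K n lam ∈ I →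
      ∀ i j : Fin n, i < j → lam i < lam j →
        mon K n (borelMoveVec n lam i j) ∈ I

/-- The dominance order on partitions: `μ ⊴ λ`. -/
def dominates (n : ℕ) (μ lam : Fin n → ℕ) : Prop :=
  ∀ k : Fin n, ∑ i ∈ Finset.Ici k, μ i ≤ ∑ i ∈ Finset.Ici k, lam i

/-- A strongly stable monomial ideal: a monomial ideal closed under the Borel
moves `x^a ↦ x^a · x_i / x_j` for `i < j` with `a_j ≠ 0`. -/
def IsStronglyStable (K : Type) [Field K] (n : ℕ)
    (I : Ideal (MvPolynomial (Fin n) K)) : Prop :=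
  IsMonomialIdeal K n I ∧
    ∀ a : Fin n → ℕ, mon K n a ∈ I → ∀ i j : Fin n, i < j → a j ≠ 0 →
      mon K n (borelMoveVec n a i j) ∈ I

open Finset

section BorelMove

variable {n : ℕ} {a b : Fin n → ℕ} {i j : Fin n}

lemma borelMoveVec_add_single (hij : i ≠ j) (hj : a j ≠ 0) :
    borelMoveVec n a i j + Pi.single j 1 = a + Pi.single i 1 := by
  funext k
  rcases eq_or_ne k i with rfl | hki
  · simp [borelMoveVec, hij]
  · rcases eq_or_ne k j with rfl | hkj
    · simp only [Pi.add_apply, borelMoveVec, hki, ↓reduceIte, Pi.single_eq_same,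
        Pi.single_eq_of_ne hki, add_zero]
      omega
    · simp [borelMoveVec, hki, hkj]

lemma sum_borelMoveVec (hij : i ≠ j) (hj : a j ≠ 0) :
    ∑ k, borelMoveVec n a i j k = ∑ k, a k := by
  have h := congrArg (fun c : Fin n → ℕ => ∑ k, c k) (borelMoveVec_add_single hij hj)
  simpa only [Pi.add_apply, sum_add_distrib, sum_pi_single', mem_univ, if_true,
    add_left_inj] using h

lemma borelMoveVec_comp_swap (hij : i ≠ j) :
    borelMoveVec n (a ∘ Equiv.swap i j) j i ∘ Equiv.swap i j = borelMoveVec n a i j := by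
  funext k
  rcases eq_or_ne k i with rfl | hki
  · simp [borelMoveVec]
  · rcases eq_or_ne k j with rfl | hkj
    · simp [borelMoveVec, hki, hij]
    · simp [borelMoveVec, Equiv.swap_apply_of_ne_of_ne hki hkj, hki, hkj]

/-- Induction on the excess `∑ k, (a k - b k)`: moving one unit from a coordinate where `a`
exceeds `b` to one where it falls short lowers the excess by one. -/
theorem of_sum_eq_of_forall_borelMoveVec {P : (Fin n → ℕ) → Prop}
    (hP : ∀ a, P a → ∀ i j, i ≠ j → a j ≠ 0 → P (borelMoveVec n a i j))
    (ha : P a) (hab : ∑ k, a k = ∑ k, b k) : P b := by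
  induction hD : ∑ k, (a k - b k) generalizing a with
  | zero =>
    have hle : ∀ k ∈ univ, a k ≤ b k := fun k hk =>
      Nat.sub_eq_zero_iff_le.1 (sum_eq_zero_iff.1 hD k hk)
    have hab' : a = b := funext fun k => (sum_eq_sum_iff_of_le hle).1 hab k (mem_univ k)
    exact hab' ▸ ha
  | succ D ih =>
    obtain ⟨j, -, hj⟩ : ∃ j ∈ univ, b j < a j := by
      by_contra! h
      rw [sum_eq_zero fun k hk => Nat.sub_eq_zero_of_le (h k hk)] at hD
      omega
    obtain ⟨i, -, hi⟩ : ∃ i ∈ univ, a i < b i := by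
      by_contra! h
      have := sum_lt_sum h ⟨j, mem_univ j, hj⟩
      omega
    have hij : i ≠ j := by rintro rfl; omega
    refine ih (hP a ha i j hij (by omega)) (by rw [sum_borelMoveVec hij (by omega), hab]) ?_
    have hexcess : ∀ k,
        borelMoveVec n a i j k - b k + (Pi.single j 1 : Fin n → ℕ) k = a k - b k := by
      intro k
      rcases eq_or_ne k i with rfl | hki
      · simp only [borelMoveVec, ↓reduceIte, Pi.single_eq_of_ne hij, add_zero]
        omega
      · rcases eq_or_ne k j with rfl | hkj
        · simp only [borelMoveVec, hki, ↓reduceIte, Pi.single_eq_same]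
          omega
        · simp [borelMoveVec, hki, hkj]
    have := sum_congr rfl fun k (_ : k ∈ univ) => hexcess k
    rw [sum_add_distrib, sum_pi_single', if_pos (mem_univ j)] at this
    omega

end BorelMove

section Ideals

variable {K : Type} [Field K] {n : ℕ} {I : Ideal (MvPolynomial (Fin n) K)} {a : Fin n → ℕ}

lemma monomial_one_eq_mon (x : Fin n →₀ ℕ) : monomial x (1 : K) = mon K n x := by
  rw [mon, Finsupp.equivFunOnFinite_symm_coe]

lemma mon_mem_pow_idealOfVars_iff {d : ℕ} :
    mon K n a ∈ idealOfVars (Fin n) K ^ d ↔ d ≤ ∑ k, a k := by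
  rw [mon, monomial_mem_pow_idealOfVars_iff _ _ one_ne_zero, Finsupp.degree_eq_sum]
  rfl

lemma rename_mon (σ : Equiv.Perm (Fin n)) (a : Fin n → ℕ) :
    rename σ (mon K n a) = mon K n (a ∘ σ.symm) := by
  rw [mon, mon, rename_monomial]
  congr 2
  ext k
  exact Finsupp.mapDomain_equiv_apply (f := σ) _ k

lemma IsSymmetricIdeal.mon_comp_mem (hI : IsSymmetricIdeal K n I) (ha : mon K n a ∈ I)
    (σ : Equiv.Perm (Fin n)) : mon K n (a ∘ σ) ∈ I := by
  have h := Ideal.mem_map_of_mem (rename (σ.symm : Fin n → Fin n)) ha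
  rwa [hI σ.symm, rename_mon, Equiv.symm_symm] at h

lemma IsStronglyStable.mon_borelMoveVec_mem (hss : IsStronglyStable K n I)
    (hsym : IsSymmetricIdeal K n I) (ha : mon K n a ∈ I) {i j : Fin n} (hij : i ≠ j)
    (hj : a j ≠ 0) : mon K n (borelMoveVec n a i j) ∈ I := by
  rcases hij.lt_or_gt with hlt | hgt
  · exact hss.2 a ha i j hlt hj
  · have hswap := hss.2 _ (hsym.mon_comp_mem ha (Equiv.swap i j)) j i hgt
      (by simpa using hj)
    rw [← borelMoveVec_comp_swap hij]
    exact hsym.mon_comp_mem hswap _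

lemma IsStronglyStable.pow_idealOfVars_le (hss : IsStronglyStable K n I)
    (hsym : IsSymmetricIdeal K n I) (ha : mon K n a ∈ I) :
    idealOfVars (Fin n) K ^ (∑ k, a k) ≤ I := by
  rw [pow_idealOfVars_eq_span, Ideal.span_le]
  rintro _ ⟨x, hx, rfl⟩
  rw [Set.mem_preimage, Set.mem_singleton_iff, Finsupp.degree_eq_sum] at hx
  beta_reduce
  rw [SetLike.mem_coe, monomial_one_eq_mon]
  exact of_sum_eq_of_forall_borelMoveVec (P := fun c => mon K n c ∈ I)
    (fun _ hc _ _ hij hj => hss.mon_borelMoveVec_mem hsym hc hij hj) ha hx.symm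

lemma isSymmetricIdeal_pow_idealOfVars (d : ℕ) :
    IsSymmetricIdeal K n (idealOfVars (Fin n) K ^ d) := by
  intro σ
  have hX : rename σ ∘ X = (X ∘ σ : Fin n → MvPolynomial (Fin n) K) :=
    funext fun i => rename_X σ i
  rw [Ideal.map_pow, Ideal.map_span, ← Set.range_comp, hX, σ.surjective.range_comp]

lemma isStronglyStable_pow_idealOfVars (d : ℕ) :
    IsStronglyStable K n (idealOfVars (Fin n) K ^ d) := by
  refine ⟨⟨{a | ∑ k, a k = d}, ?_⟩, fun a ha i j hij hj => ?_⟩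
  · rw [pow_idealOfVars_eq_span]
    congr 1
    ext p
    simp only [Set.mem_image, Set.mem_preimage, Set.mem_singleton_iff, Finsupp.degree_eq_sum,
      mon, Set.mem_ofPred_eq]
    rw [Finsupp.equivFunOnFinite.exists_congr_left]
    simp
  · rw [mon_mem_pow_idealOfVars_iff] at ha ⊢
    rwa [sum_borelMoveVec hij.ne hj]

end Ideals

/-- The only nonzero monomial ideals of `K[x_1,...,x_n]` that are both
`𝔖_n`-fixed and strongly stable are the powers `(x_1,...,x_n)^d` of the
homogeneous maximal ideal. -/
theorem symmetric_stronglyStable_iff_power_of_max (K : Type) [Field K] (n : ℕ)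
    (I : Ideal (MvPolynomial (Fin n) K)) (hne : I ≠ ⊥) :
    (IsSymmetricIdeal K n I ∧ IsStronglyStable K n I) ↔
      ∃ d : ℕ,
        I = (Ideal.span (Set.range (X : Fin n → MvPolynomial (Fin n) K))) ^ d := by
  refine ⟨fun ⟨hsym, hss⟩ => ?_, ?_⟩
  · obtain ⟨S, hS⟩ := hss.1
    have hSne : S.Nonempty := by
      refine Set.nonempty_iff_ne_empty.2 fun hS₀ => hne ?_
      rw [hS, hS₀, Set.image_empty, Ideal.span_empty]
    set a₀ := Function.argminOn (fun a => ∑ k, a k) S hSne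
    have ha₀ : mon K n a₀ ∈ I := hS ▸ Ideal.subset_span ⟨a₀, Function.argminOn_mem _ _ _, rfl⟩
    refine ⟨∑ k, a₀ k, le_antisymm ?_ (hss.pow_idealOfVars_le hsym ha₀)⟩
    rw [hS, Ideal.span_le]
    rintro _ ⟨a, ha, rfl⟩
    exact mon_mem_pow_idealOfVars_iff.2 (Function.argminOn_le _ _ ha)
  · rintro ⟨d, rfl⟩
    exact ⟨isSymmetricIdeal_pow_idealOfVars d, isStronglyStable_pow_idealOfVars d⟩
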